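/- arXiv:1809.01955 — 2 statements merged into one kernel-verified Lean document; each statement's English description precedes it below -/
import Mathlib

section
/- If o' < o (o' is a proper prefix of trace graph o) and an execution (s0, u) satisfies (s0, u) ⊑ o' and every event of u lies in E_{o'}, then (s0, u) ⊑ o, provided E_{o'} is downward-closed in →_o. -/
variable {S T : Type}

/-- A symbolic trace graph: events, path constraints (state predicates),
and a labeled edge (happens-before) relation. -/
structure STG (S T : Type) where
  events : Set (T × ℕ)
  constraints : Set (S → Prop)
  edges : Set ((T × ℕ) × (S → Prop) × (T × ℕ))

/-- Remove an event and all incident edges from a symbolic trace graph. -/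
def STG.remove (o : STG S T) (e : T × ℕ) : STG S T where
  events := o.events \ {e}
  edges := {x | x ∈ o.edges ∧ x.1 ≠ e ∧ x.2.2 ≠ e}
  constraints := {c | ∃ e1 e2, (e1, c, e2) ∈ o.edges ∧ e1 ≠ e ∧ e2 ≠ e}

/-- Adherence `(s, u) ⊑ o` of an execution to a symbolic trace graph.
The program is given by its (deterministic, partial) transition function `δ`. -/
def adheres (δ : S → T → Option S) : S → List (T × ℕ) → STG S T → Prop
  | _, [], _ => True
  | s, e :: rest, o =>
      e ∈ o.events ∧ (∀ e' c, (e', c, e) ∈ o.edges → ¬ c s) ∧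
      ∃ s', δ s e.1 = some s' ∧ adheres δ s' rest (o.remove e)

/-- `reaches δ s u s'` : executing the event sequence `u` from `s` leads to `s'`. -/
def reaches (δ : S → T → Option S) : S → List (T × ℕ) → S → Prop
  | s, [], sf => sf = s
  | s, e :: rest, sf => ∃ s', δ s e.1 = some s' ∧ reaches δ s' rest sf

/-- Matching `(s, u) ⊨ o`: adherence plus the events of `u` are exactly the events of `o`. -/
def tmatch (δ : S → T → Option S) (s : S) (u : List (T × ℕ)) (o : STG S T) : Prop :=
  adheres δ s u o ∧ {e | e ∈ u} = o.events

/-- The set of synchronization-free continuations of execution `(s0, u)` w.r.t. `o`. -/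
def free (δ : S → T → Option S) (s0 : S) (u : List (T × ℕ)) (o : STG S T) :
    Set (List (T × ℕ)) :=
  {v | v ≠ [] ∧ (∃ s, reaches δ s0 (u ++ v) s) ∧
    ∀ i, (h : i < v.length) → v.get ⟨i, h⟩ ∉ o.events ∨
      adheres δ s0 (u ++ v.take (i + 1)) o}

/-- Valid execution with correct occurrence counts, starting from the counter `cnt`. -/
def isExecC (δ : S → T → Option S) [DecidableEq T] :
    (T → ℕ) → S → List (T × ℕ) → Prop
  | _, _, [] => True
  | cnt, s, (t, k) :: rest =>
      k = cnt t ∧ ∃ s', δ s t = some s' ∧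
        isExecC δ (Function.update cnt t (cnt t + 1)) s' rest

/-- `(s, u)` is a valid execution: transitions exist and each event `(t, k)`
carries the number `k` of prior occurrences of thread `t`. -/
def isExec (δ : S → T → Option S) [DecidableEq T] (s : S) (u : List (T × ℕ)) : Prop :=
  isExecC δ (fun _ => 0) s u

/-- The prefix order on symbolic trace graphs. -/
def STG.lt (o1 o2 : STG S T) : Prop :=
  o1.events ⊂ o2.events ∧
  o1.edges = {x | x ∈ o2.edges ∧ x.1 ∈ o1.events ∧ x.2.2 ∈ o1.events} ∧
  o1.constraints = {c | ∃ e1 e2, (e1, c, e2) ∈ o1.edges} ∧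
  ∀ e1 c e2, (e1, c, e2) ∈ o2.edges → e1 ∉ o1.events → e2 ∉ o1.events

/-- The list of states visited by an execution. -/
def chain (δ : S → T → Option S) : S → List (T × ℕ) → List S → Prop
  | s, [], l => l = [s]
  | s, e :: rest, l => ∃ s' l', δ s e.1 = some s' ∧ chain δ s' rest l' ∧ l = s :: l'

theorem STG.lt.mem_edges_of_target_mem {o' o : STG S T} (hlt : o'.lt o)
    {e' e : T × ℕ} {c : S → Prop} (hx : (e', c, e) ∈ o.edges) (he : e ∈ o'.events) :
    (e', c, e) ∈ o'.edges := by
  obtain ⟨-, hedges, -, hclosed⟩ := hlt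
  have he' : e' ∈ o'.events := by_contra fun he' => hclosed e' c e hx he' he
  rw [hedges]
  exact ⟨hx, he', he⟩

/-- `hin`, unlike `o'.lt o`, is preserved by removing the executed event from both graphs,
so it is the right induction invariant. -/
theorem adheres_mono (δ : S → T → Option S) {o' o : STG S T} (hsub : o'.events ⊆ o.events)
    (hin : ∀ e' c e, (e', c, e) ∈ o.edges → e ∈ o'.events → (e', c, e) ∈ o'.edges)
    {s : S} {u : List (T × ℕ)} (h : adheres δ s u o') : adheres δ s u o := by
  induction u generalizing s o' o with
  | nil => trivial
  | cons e rest ih =>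
    obtain ⟨hmem, hunblocked, s', hstep, hrest⟩ := h
    refine ⟨hsub hmem, fun e' c hx => hunblocked e' c (hin e' c e hx hmem), s', hstep, ?_⟩
    refine ih (Set.sdiff_subset_sdiff_left hsub) ?_ hrest
    rintro e1 c e2 ⟨hx, h1, h2⟩ ⟨he2, -⟩
    exact ⟨hin e1 c e2 hx he2, h1, h2⟩

theorem adheres_of_lt_general (δ : S → T → Option S) (o' o : STG S T) (hlt : STG.lt o' o)
    (s0 : S) (u : List (T × ℕ)) (h : adheres δ s0 u o') : adheres δ s0 u o :=
  adheres_mono δ hlt.1.subset (fun _ _ _ hx he => hlt.mem_edges_of_target_mem hx he) h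

/-- if `o' < o` (which includes downward-closure of `E_{o'}` in `→_o`),
an execution adheres to `o'`, and all its events lie in `E_{o'}`,
then it adheres to `o`. -/
theorem adheres_of_lt (δ : S → T → Option S) (o' o : STG S T) (hlt : STG.lt o' o)
    (s0 : S) (u : List (T × ℕ)) (h : adheres δ s0 u o')
    (he : ∀ e ∈ u, e ∈ o'.events) : adheres δ s0 u o :=
  adheres_of_lt_general δ o' o hlt s0 u h
end

section
/- If (s0, u) ⊑ o and e is an event not occurring in u, then (s0, u) ⊑ remove(e, o). -/
variable {S T : Type}

lemma STG.remove_comm (o : STG S T) (e e' : T × ℕ) :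
    (o.remove e).remove e' = (o.remove e').remove e := by
  simp only [STG.remove]
  congr 1
  · ext x; simp; tauto
  · ext c; simp; tauto
  · ext x; simp; tauto

/-- if `(s0, u) ⊑ o` and `e` does not occur in `u`, then
`(s0, u) ⊑ remove(e, o)` (unconditionally). -/
theorem adheres_remove_of_not_mem (δ : S → T → Option S) (s0 : S)
    (u : List (T × ℕ)) (o : STG S T) (e : T × ℕ)
    (he : e ∉ u) (h : adheres δ s0 u o) :
    adheres δ s0 u (o.remove e) := by
  induction u generalizing s0 o with
  | nil => trivial
  | cons e1 rest ih =>
    obtain ⟨hev, hin, s', hδ, hrest⟩ := h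
    refine ⟨⟨hev, ?_⟩, ?_, s', hδ, ?_⟩
    · intro hh
      exact he (by simp [Set.mem_singleton_iff.mp hh])
    · intro e' c hc; exact hin e' c hc.1
    · rw [STG.remove_comm]
      exact ih s' (o.remove e1) (fun hm => he (List.mem_cons_of_mem _ hm)) hrest
end
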